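/- arXiv:1604.05163 — 4 statements merged into one kernel-verified Lean document; each statement's English description precedes it below -/
import Mathlib

section
/- Let b, c, ρ ∈ ℂ with b ≠ 0 and Re(ρ) > 0, let ν ∈ ℤ, and let z ∈ ℂ. Then the unified four parameter Bessel function satisfies G_{-ν}^{(b,c)}(z;ρ) = (-b)^ν · G_ν^{(b,c)}(z;ρ), where (-b)^ν is the integer power. -/
open Complex MeasureTheory Real Set

/-- Extended Gamma function `Γ_ρ(x) = ∫_0^∞ t^(x-1) e^(-t-ρ/t) dt`. -/
noncomputable def extGamma (ρ x : ℂ) : ℂ :=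
  ∫ t in Ioi (0:ℝ), (t:ℂ) ^ (x - 1) * Complex.exp (-(t:ℂ) - ρ / (t:ℂ))

/-- Generalized Pochhammer symbol `(c;ρ)_μ = Γ_ρ(c+μ)/Γ(c)`. -/
noncomputable def genPoch (c ρ μ : ℂ) : ℂ := extGamma ρ (c + μ) / Complex.Gamma c

/-- Unified four parameter Bessel function `G_ν^{(b,c)}(z;ρ)` with complex order,
powers being principal complex powers. -/
noncomputable def unifiedG (b c ν ρ z : ℂ) : ℂ :=
  ∑' k : ℕ, (-b) ^ k * genPoch c ρ (2 * (k:ℂ) + ν) * (z / 2) ^ (2 * (k:ℂ) + ν) /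
    ((k.factorial : ℂ) * Complex.Gamma (ν + (k:ℂ) + 1) * Complex.Gamma (ν + 2 * (k:ℂ) + 1))

/-- Unified four parameter Bessel function with integer order, powers being integer powers. -/
noncomputable def unifiedGInt (b c ρ : ℂ) (ν : ℤ) (z : ℂ) : ℂ :=
  ∑' k : ℕ, (-b) ^ k * genPoch c ρ (2 * (k:ℂ) + (ν:ℂ)) * (z / 2) ^ (2 * (k:ℤ) + ν) /
    ((k.factorial : ℂ) * Complex.Gamma ((ν:ℂ) + (k:ℂ) + 1) * Complex.Gamma ((ν:ℂ) + 2 * (k:ℂ) + 1))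

/-- Pochhammer symbol `(a)_k = Γ(a+k)/Γ(a)`. -/
noncomputable def poch (a : ℂ) (k : ℕ) : ℂ := Complex.Gamma (a + (k:ℂ)) / Complex.Gamma a

/-- Generalized hypergeometric function `₀F₃`. -/
noncomputable def hyp0F3 (a₁ a₂ a₃ w : ℂ) : ℂ :=
  ∑' k : ℕ, w ^ k / (poch a₁ k * poch a₂ k * poch a₃ k * (k.factorial : ℂ))

/-- Generalized hypergeometric function `₂F₃`. -/
noncomputable def hyp2F3 (a₁ a₂ b₁ b₂ b₃ w : ℂ) : ℂ :=
  ∑' k : ℕ, poch a₁ k * poch a₂ k * w ^ k /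
    (poch b₁ k * poch b₂ k * poch b₃ k * (k.factorial : ℂ))

/-- Bessel function of the first kind `J_μ(z)` for real `z > 0`. -/
noncomputable def besselJ (μ : ℂ) (z : ℝ) : ℂ :=
  ∑' k : ℕ, (-1) ^ k * ((z:ℂ) / 2) ^ (2 * (k:ℂ) + μ) /
    ((k.factorial : ℂ) * Complex.Gamma (μ + (k:ℂ) + 1))

/-- Generalized four parameter spherical Bessel function
`g_ν^{(b,c)}(z;ρ) = √(π/(2z)) · G_{ν+1/2}^{(b,c-1/2)}(z;ρ)`. -/
noncomputable def sphG (b c ν ρ : ℂ) (z : ℝ) : ℂ :=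
  (Real.sqrt (π / (2 * z)) : ℂ) * unifiedG b (c - 1/2) (ν + 1/2) ρ (z:ℂ)

/-- Generalized four parameter Bessel-Clifford function
`C_ν^{(b,λ)}(z;ρ) = z^{-ν/2} · G_ν^{(b,λ)}(2√z;ρ)` for real `z > 0`. -/
noncomputable def cliffC (b lam ν ρ : ℂ) (z : ℝ) : ℂ :=
  (z:ℂ) ^ (-ν / 2) * unifiedG b lam ν ρ ((2 * Real.sqrt z : ℝ) : ℂ)

theorem stmt0 (b c ρ : ℂ) (hb : b ≠ 0) (hρ : 0 < ρ.re) (ν : ℤ) (z : ℂ) :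
    unifiedGInt b c ρ (-ν) z = (-b) ^ ν * unifiedGInt b c ρ ν z := by
  have hnb : (-b) ≠ 0 := neg_ne_zero.mpr hb
  suffices key : ∀ n : ℕ, unifiedGInt b c ρ (-(n:ℤ)) z = (-b) ^ (n:ℤ) * unifiedGInt b c ρ (n:ℤ) z by
    obtain ⟨n, rfl | rfl⟩ := ν.eq_nat_or_neg
    · exact key n
    · rw [neg_neg, key n, ← mul_assoc, ← zpow_add₀ hnb]
      simp
  intro n
  unfold unifiedGInt
  rw [← tsum_mul_left]
  have hinj : Function.Injective (fun j : ℕ => j + n) := fun a b h => by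
    simpa using h
  rw [← Function.Injective.tsum_eq hinj ?_]
  · refine tsum_congr fun j => ?_
    have G1 : Complex.Gamma ((↑(-(n:ℤ)):ℂ) + ↑(j+n) + 1) = (j.factorial : ℂ) := by
      rw [show (↑(-(n:ℤ)):ℂ) + ↑(j+n) + 1 = ((j:ℂ) + 1) by push_cast; ring]
      exact_mod_cast Complex.Gamma_nat_eq_factorial j
    have G2 : Complex.Gamma ((↑(-(n:ℤ)):ℂ) + 2*↑(j+n) + 1) = Complex.Gamma ((↑(n:ℤ):ℂ) + 2*↑j + 1) := by
      congr 1; push_cast; ring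
    have G3 : Complex.Gamma ((↑(n:ℤ):ℂ) + ↑j + 1) = ((n+j).factorial : ℂ) := by
      rw [show (↑(n:ℤ):ℂ) + ↑j + 1 = (((n+j:ℕ):ℂ) + 1) by push_cast; ring]
      exact_mod_cast Complex.Gamma_nat_eq_factorial (n+j)
    have P : genPoch c ρ (2 * ((j+n:ℕ):ℂ) + (↑(-(n:ℤ)):ℂ)) = genPoch c ρ (2 * (j:ℂ) + (↑(n:ℤ):ℂ)) := by
      congr 1; push_cast; ring
    have E : (2 * ((j+n:ℕ):ℤ) + -(n:ℤ)) = ((2*j+n : ℕ) : ℤ) := by push_cast; ring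
    have E2 : (2 * (j:ℤ) + (n:ℤ)) = ((2*j+n : ℕ) : ℤ) := by push_cast; ring
    simp only [G1, G2, G3, P, E, E2]
    simp only [zpow_natCast]
    rw [pow_add, Nat.add_comm j n]
    ring
  · intro x hx
    simp only [Function.mem_support] at hx
    rcases le_or_gt n x with h | h
    · exact ⟨x - n, by simp; omega⟩
    · exfalso
      apply hx
      obtain ⟨m, hm⟩ : ∃ m, n = x + 1 + m := ⟨n - x - 1, by omega⟩
      have h0 : Complex.Gamma ((↑(-(n:ℤ)):ℂ) + ↑x + 1) = 0 := by
        rw [show (↑(-(n:ℤ)):ℂ) + ↑x + 1 = -(m:ℂ) by subst hm; push_cast; ring]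
        exact Complex.Gamma_neg_nat_eq_zero m
      rw [h0]
      simp
end

section
/- Let b, c, ρ ∈ ℂ with Re(ρ) > 0, let z ∈ ℂ, and let t ∈ ℂ with t ≠ 0. Then the family (G_n^{(b,c)}(z;ρ) · t^n)_{n∈ℤ} is summable and Σ_{n=-∞}^∞ G_n^{(b,c)}(z;ρ) t^n = Σ_{n=0}^∞ (c;ρ)_n · ((t - b/t)·z/2)^n / (n!)², i.e. the two-sided generating series equals the generalized confluent hypergeometric function ₁F₁((c;ρ),1;(t - b/t)z/2). -/
open Complex MeasureTheory Real Set

/-! Put `n = m - 2k`. Terms with `n + 2k < 0` vanish, and the `(m, k)` term of the double series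
`∑ₙ ∑ₖ` becomes `(c;ρ)_m (z/2)^m / (m!)² · C(m,k) (-b/t)^k t^(m-k)`, so summing over `k` by the
binomial theorem gives the `m`-th term of `₁F₁((c;ρ),1;(t - b/t)z/2)`. The rearrangement is
justified by absolute convergence: `‖Γ_ρ(x)‖ ≤ Γ(Re x)`, and `∑ Γ(s+m) y^m / (m!)²` converges
for every `y` by the ratio test. -/

open scoped Nat
open Filter

theorem Complex.Gamma_intCast_eq_zero_of_nonpos {n : ℤ} (hn : n ≤ 0) : Complex.Gamma n = 0 := by
  obtain ⟨j, rfl⟩ : ∃ j : ℕ, n = -j := ⟨n.natAbs, by omega⟩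
  simpa using Complex.Gamma_neg_nat_eq_zero j

theorem norm_extGamma_le {ρ x : ℂ} (hρ : 0 ≤ ρ.re) (hx : 0 < x.re) :
    ‖extGamma ρ x‖ ≤ Real.Gamma x.re := by
  rw [Real.Gamma_eq_integral hx]
  refine norm_integral_le_of_norm_le (Real.GammaIntegral_convergent hx) ?_
  filter_upwards [ae_restrict_mem measurableSet_Ioi] with s (hs : 0 < s)
  rw [norm_mul, Complex.norm_cpow_eq_rpow_re_of_pos hs, Complex.norm_exp, mul_comm,
    show (x - 1).re = x.re - 1 by simp]
  gcongr
  simp only [sub_re, neg_re, ofReal_re, div_ofReal_re]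
  have : 0 ≤ ρ.re / s := div_nonneg hρ hs.le
  linarith

theorem summable_Gamma_add_mul_pow_div_factorial_sq (s y : ℝ) :
    Summable fun m : ℕ => Real.Gamma (s + m) * y ^ m / (m ! : ℝ) ^ 2 := by
  refine summable_of_ratio_norm_eventually_le (r := 1 / 2) (by norm_num) ?_
  filter_upwards [eventually_ge_atTop ⌈|s| + 4 * |y| + 1⌉₊] with m hm
  have hm : |s| + 4 * |y| + 1 ≤ m := Nat.ceil_le.mp hm
  have hsm : s + m ≠ 0 := by
    intro h
    linarith [neg_abs_le s, abs_nonneg y]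
  have hratio : |s + m| * |y| ≤ 1 / 2 * ((m : ℝ) + 1) ^ 2 := by
    have h1 : |s + m| ≤ 2 * m :=
      (abs_add_le _ _).trans (by rw [Nat.abs_cast]; linarith [abs_nonneg y])
    have h2 : 4 * |y| ≤ m := by linarith [abs_nonneg s]
    nlinarith [abs_nonneg y, abs_nonneg (s + m)]
  have hstep : Real.Gamma (s + ↑(m + 1)) * y ^ (m + 1) / ((m + 1)! : ℝ) ^ 2 =
      (s + m) * y / ((m : ℝ) + 1) ^ 2 * (Real.Gamma (s + m) * y ^ m / (m ! : ℝ) ^ 2) := by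
    rw [Nat.cast_succ, ← add_assoc, Real.Gamma_add_one hsm, Nat.factorial_succ]
    push_cast
    field_simp
    ring
  rw [hstep, norm_mul]
  gcongr
  simp only [norm_div, norm_mul, norm_pow, Real.norm_eq_abs]
  rw [abs_of_pos (by positivity : (0 : ℝ) < m + 1), div_le_iff₀ (by positivity)]
  exact hratio

theorem summable_genPoch_mul_pow_div_factorial_sq (c : ℂ) {ρ : ℂ} (hρ : 0 ≤ ρ.re) (w : ℂ) :
    Summable fun m : ℕ => genPoch c ρ m * w ^ m / (m ! : ℂ) ^ 2 := by
  refine .of_norm_bounded_eventually_nat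
    ((summable_Gamma_add_mul_pow_div_factorial_sq c.re ‖w‖).div_const ‖Complex.Gamma c‖) ?_
  filter_upwards [eventually_gt_atTop ⌈-c.re⌉₊] with m hm
  have hre : 0 < (c + m).re := by
    have := Nat.lt_of_ceil_lt hm
    simp only [add_re, natCast_re]
    linarith
  have hnorm : ‖genPoch c ρ m * w ^ m / (m ! : ℂ) ^ 2‖ =
      ‖extGamma ρ (c + m)‖ * ‖w‖ ^ m / (m ! : ℝ) ^ 2 / ‖Complex.Gamma c‖ := by
    simp only [genPoch, norm_div, norm_mul, norm_pow, Complex.norm_natCast]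
    ring
  rw [hnorm]
  gcongr
  simpa using norm_extGamma_le hρ hre

noncomputable def unifiedGIntTerm (b c ρ : ℂ) (n : ℤ) (z : ℂ) (k : ℕ) : ℂ :=
  (-b) ^ k * genPoch c ρ (2 * (k:ℂ) + (n:ℂ)) * (z / 2) ^ (2 * (k:ℤ) + n) /
    ((k.factorial : ℂ) * Complex.Gamma ((n:ℂ) + (k:ℂ) + 1) * Complex.Gamma ((n:ℂ) + 2 * (k:ℂ) + 1))

section UnifiedGIntTerm

variable (b c ρ z : ℂ)

theorem unifiedGInt_eq_tsum (n : ℤ) :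
    unifiedGInt b c ρ n z = ∑' k, unifiedGIntTerm b c ρ n z k := rfl

/-- Lean's `Γ` vanishes at nonpositive integers, so with `x / 0 = 0` this is the convention
`1 / Γ(w) = 0` there. -/
theorem unifiedGIntTerm_eq_zero {n : ℤ} {k : ℕ} (h : n + 2 * k < 0) :
    unifiedGIntTerm b c ρ n z k = 0 := by
  have : Complex.Gamma ((n:ℂ) + 2 * (k:ℂ) + 1) = 0 := by
    exact_mod_cast Complex.Gamma_intCast_eq_zero_of_nonpos (n := n + 2 * k + 1) (by omega)
  simp [unifiedGIntTerm, this]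

theorem unifiedGIntTerm_sub_two_mul (m k : ℕ) :
    unifiedGIntTerm b c ρ (m - 2 * k) z k =
      genPoch c ρ m * (z / 2) ^ m / (m ! : ℂ) ^ 2 * (m.choose k * (-b) ^ k) := by
  have hpoch : 2 * (k : ℂ) + ((m - 2 * k : ℤ) : ℂ) = m := by push_cast; ring
  have hpow : (z / 2) ^ (2 * (k : ℤ) + (m - 2 * k)) = (z / 2) ^ m := by
    rw [show 2 * (k : ℤ) + (m - 2 * k) = m by ring, zpow_natCast]
  have hfact : Complex.Gamma (((m - 2 * k : ℤ) : ℂ) + 2 * k + 1) = m ! := by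
    rw [← Complex.Gamma_nat_eq_factorial]; push_cast; ring_nf
  rcases le_or_gt k m with hkm | hkm
  · have hfact' : Complex.Gamma (((m - 2 * k : ℤ) : ℂ) + k + 1) = (m - k)! := by
      rw [← Complex.Gamma_nat_eq_factorial]; push_cast [Nat.cast_sub hkm]; ring_nf
    have hchoose : (m.choose k : ℂ) * k ! * (m - k)! = m ! := by
      exact_mod_cast Nat.choose_mul_factorial_mul_factorial hkm
    rw [unifiedGIntTerm, hpoch, hpow, hfact, hfact', ← hchoose]
    field_simp
  · have hzero : Complex.Gamma (((m - 2 * k : ℤ) : ℂ) + k + 1) = 0 := by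
      exact_mod_cast Complex.Gamma_intCast_eq_zero_of_nonpos (n := m - 2 * k + k + 1) (by omega)
    rw [unifiedGIntTerm, hzero, Nat.choose_eq_zero_of_lt hkm]
    simp

theorem unifiedGIntTerm_sub_two_mul_mul_zpow {t : ℂ} (ht : t ≠ 0) (m k : ℕ) :
    unifiedGIntTerm b c ρ (m - 2 * k) z k * t ^ ((m : ℤ) - 2 * k) =
      genPoch c ρ m * (z / 2) ^ m / (m ! : ℂ) ^ 2 *
        (m.choose k * (-(b / t)) ^ k * t ^ (m - k)) := by
  rw [unifiedGIntTerm_sub_two_mul]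
  rcases le_or_gt k m with hkm | hkm
  · have hbt : (-(b / t)) ^ k * t ^ k = (-b) ^ k := by
      rw [← mul_pow, neg_mul, div_mul_cancel₀ b ht]
    rw [show (m : ℤ) - 2 * k = ((m - k : ℕ) : ℤ) - k by omega, zpow_sub₀ ht, zpow_natCast,
      zpow_natCast, ← hbt]
    field_simp
  · simp [Nat.choose_eq_zero_of_lt hkm]

theorem tsum_unifiedGIntTerm_sub_two_mul_mul_zpow {t : ℂ} (ht : t ≠ 0) (m : ℕ) :
    ∑' k : ℕ, unifiedGIntTerm b c ρ (m - 2 * k) z k * t ^ ((m : ℤ) - 2 * k) =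
      genPoch c ρ m * ((t - b / t) * z / 2) ^ m / (m ! : ℂ) ^ 2 := by
  simp_rw [unifiedGIntTerm_sub_two_mul_mul_zpow b c ρ z ht, tsum_mul_left]
  have hvanish : ∀ k ∉ Finset.range (m + 1), (m.choose k : ℂ) * (-(b / t)) ^ k * t ^ (m - k) = 0 :=
    fun k hk => by simp [Nat.choose_eq_zero_of_lt (by simpa using hk : m < k)]
  rw [tsum_eq_sum hvanish]
  have hbinom : ∑ k ∈ Finset.range (m + 1), (m.choose k : ℂ) * (-(b / t)) ^ k * t ^ (m - k) =
      (t - b / t) ^ m := by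
    rw [sub_eq_neg_add, add_pow]
    exact Finset.sum_congr rfl fun k _ => by ring
  rw [hbinom, mul_div_assoc (t - b / t), mul_pow]
  ring

theorem summable_norm_unifiedGIntTerm_sub_two_mul_mul_zpow {t : ℂ} (ht : t ≠ 0) (hρ : 0 ≤ ρ.re) :
    Summable fun q : ℕ × ℕ =>
      ‖unifiedGIntTerm b c ρ (q.1 - 2 * q.2) z q.2 * t ^ ((q.1 : ℤ) - 2 * q.2)‖ := by
  have hterm (m k : ℕ) :
      ‖unifiedGIntTerm b c ρ (m - 2 * k) z k * t ^ ((m : ℤ) - 2 * k)‖ =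
        ‖genPoch c ρ m * (z / 2) ^ m / (m ! : ℂ) ^ 2‖ *
          (m.choose k * ‖b / t‖ ^ k * ‖t‖ ^ (m - k)) := by
    rw [unifiedGIntTerm_sub_two_mul_mul_zpow b c ρ z ht, norm_mul]
    simp only [norm_mul, norm_pow, norm_neg, Complex.norm_natCast]
  have hvanish (m k : ℕ) (hk : k ∉ Finset.range (m + 1)) :
      ‖unifiedGIntTerm b c ρ (m - 2 * k) z k * t ^ ((m : ℤ) - 2 * k)‖ = 0 := by
    rw [hterm, Nat.choose_eq_zero_of_lt (by simpa using hk : m < k)]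
    simp
  have hrow (m : ℕ) :
      ∑' k : ℕ, ‖unifiedGIntTerm b c ρ (m - 2 * k) z k * t ^ ((m : ℤ) - 2 * k)‖ =
        ‖genPoch c ρ m * (z / 2 * (‖b / t‖ + ‖t‖ : ℝ)) ^ m / (m ! : ℂ) ^ 2‖ := by
    have hbinom : ∑ k ∈ Finset.range (m + 1), (m.choose k : ℝ) * ‖b / t‖ ^ k * ‖t‖ ^ (m - k) =
        (‖b / t‖ + ‖t‖) ^ m := by
      rw [add_pow]
      exact Finset.sum_congr rfl fun k _ => by ring
    rw [tsum_eq_sum (hvanish m)]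
    simp_rw [hterm]
    rw [← Finset.mul_sum, hbinom]
    conv_rhs => rw [mul_pow, ← mul_assoc, mul_div_right_comm, norm_mul _ (_ ^ m), norm_pow,
      Complex.norm_real, Real.norm_of_nonneg (by positivity)]
  refine (summable_prod_of_nonneg fun _ => norm_nonneg _).2
    ⟨fun m => summable_of_ne_finset_zero (hvanish m), ?_⟩
  simp_rw [hrow]
  exact (summable_genPoch_mul_pow_div_factorial_sq c hρ _).norm

end UnifiedGIntTerm

theorem stmt1 (b c ρ : ℂ) (hρ : 0 < ρ.re) (z t : ℂ) (ht : t ≠ 0) :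
    Summable (fun n : ℤ => unifiedGInt b c ρ n z * t ^ n) ∧
      ∑' n : ℤ, unifiedGInt b c ρ n z * t ^ n =
        ∑' n : ℕ, genPoch c ρ (n:ℂ) * ((t - b / t) * z / 2) ^ n / ((n.factorial : ℂ)) ^ 2 := by
  set F : ℤ × ℕ → ℂ := fun p => unifiedGIntTerm b c ρ p.1 z p.2 * t ^ p.1
  set i : ℕ × ℕ → ℤ × ℕ := fun q => (q.1 - 2 * q.2, q.2)
  have hi : Function.Injective i := fun q q' h => by
    simp only [i, Prod.mk.injEq] at h
    ext <;> omega
  have hFi : ∀ p ∉ Set.range i, F p = 0 := fun ⟨n, k⟩ hp => by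
    refine mul_eq_zero_of_left (unifiedGIntTerm_eq_zero b c ρ z ?_) _
    by_contra! h
    exact hp ⟨((n + 2 * k).toNat, k), by simp only [i]; congr; omega⟩
  have hG : Summable (F ∘ i) :=
    (summable_norm_unifiedGIntTerm_sub_two_mul_mul_zpow b c ρ z ht hρ.le).of_norm
  have hF : Summable F := (hi.summable_iff hFi).1 hG
  have hrows : HasSum (fun n : ℤ => unifiedGInt b c ρ n z * t ^ n) (∑' p, F p) := by
    simpa only [F, unifiedGInt_eq_tsum, tsum_mul_right] using
      hF.hasSum.prod_fiberwise fun n => (hF.prod_factor n).hasSum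
  have hcols : HasSum (fun m : ℕ => genPoch c ρ m * ((t - b / t) * z / 2) ^ m / (m ! : ℂ) ^ 2)
      (∑' p, F p) := by
    rw [← hi.tsum_eq (Function.support_subset_iff'.2 hFi)]
    simpa only [Function.comp, F, i, tsum_unifiedGIntTerm_sub_two_mul_mul_zpow b c ρ z ht] using
      hG.hasSum.prod_fiberwise fun m => (hG.prod_factor m).hasSum
  exact ⟨hrows.summable, hrows.tsum_eq.trans hcols.tsum_eq.symm⟩
end

section
/- Let b, c, ν, ρ ∈ ℂ with Re(ρ) > 0, Re(c) > 0 and Re(ν) > -1, and let z > 0 be real. Then G_ν^{(b,c)}(z;ρ) = (z/2)^ν / (Γ(ν+1)² Γ(c)) · ∫_0^∞ t^{c+ν-1} e^{-t - ρ/t} · ₀F₃(-; ν+1, (ν+1)/2, (ν+2)/2; -b z² t² / 16) dt. -/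
/-!
Expand `₀F₃` and integrate term by term: `t^{c+ν-1} e^{-t-ρ/t} t^{2k}` integrates to
`Γ_ρ(c+ν+2k)`, and the coefficients match those of `G` because `Γ(ν+k+1) = Γ(ν+1) (ν+1)_k` and,
by the duplication formula, `Γ(ν+1+2k) = Γ(ν+1) 4^k ((ν+1)/2)_k ((ν+2)/2)_k`.

Sum and integral may be interchanged since `e^{-ρ/t} ≤ n! (t / Re ρ)^n` bounds the `k`-th
integral by `n!/(Re ρ)^n · Γ(Re(c+ν) + n + 2k)`, and against the `₀F₃` coefficients these
bounds form a series that passes the ratio test: the ratio of consecutive terms is of order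
`k^2 / k^4`.
-/

open Complex MeasureTheory Real Set

namespace UnifiedBessel

open Filter

theorem poch_succ (a : ℂ) (k : ℕ) : poch a (k + 1) = poch a k * (a + k) := by
  unfold poch
  rcases eq_or_ne (a + k) 0 with h | h
  · rw [show a = -(k : ℂ) by linear_combination h, Complex.Gamma_neg_nat_eq_zero]
    simp
  · rw [Nat.cast_succ, ← add_assoc, Complex.Gamma_add_one _ h]
    ring

theorem Gamma_add_natCast {a : ℂ} (ha : Complex.Gamma a ≠ 0) (k : ℕ) :
    Complex.Gamma (a + k) = Complex.Gamma a * poch a k := by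
  rw [poch, mul_div_cancel₀ _ ha]

theorem Gamma_add_two_mul_natCast {a : ℂ} (ha : ∀ m : ℕ, a ≠ -m) (k : ℕ) :
    Complex.Gamma (a + 2 * k) =
      Complex.Gamma a * 4 ^ k * poch (a / 2) k * poch ((a + 1) / 2) k := by
  induction k with
  | zero =>
    have h₁ : Complex.Gamma (a / 2) ≠ 0 := Complex.Gamma_ne_zero fun m h =>
      ha (2 * m) (by push_cast; linear_combination 2 * h)
    have h₂ : Complex.Gamma ((a + 1) / 2) ≠ 0 := Complex.Gamma_ne_zero fun m h =>
      ha (2 * m + 1) (by push_cast; linear_combination 2 * h)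
    simp [poch, h₁, h₂]
  | succ k ih =>
    have h₀ : a + 2 * k ≠ 0 := fun h => ha (2 * k) (by push_cast; linear_combination h)
    have h₁ : a + 2 * k + 1 ≠ 0 := fun h => ha (2 * k + 1) (by push_cast; linear_combination h)
    rw [Nat.cast_succ, show a + 2 * ((k : ℂ) + 1) = a + 2 * k + 1 + 1 by ring,
      Complex.Gamma_add_one _ h₁, Complex.Gamma_add_one _ h₀, ih, poch_succ, poch_succ]
    ring

noncomputable def hyp0F3Term (a₁ a₂ a₃ w : ℂ) (k : ℕ) : ℂ :=
  w ^ k / (poch a₁ k * poch a₂ k * poch a₃ k * (k.factorial : ℂ))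

theorem hyp0F3_eq_tsum (a₁ a₂ a₃ w : ℂ) :
    hyp0F3 a₁ a₂ a₃ w = ∑' k, hyp0F3Term a₁ a₂ a₃ w k := rfl

theorem hyp0F3Term_mul (a₁ a₂ a₃ w u : ℂ) (k : ℕ) :
    hyp0F3Term a₁ a₂ a₃ (w * u) k = hyp0F3Term a₁ a₂ a₃ w k * u ^ k := by
  rw [hyp0F3Term, hyp0F3Term, mul_pow, mul_div_right_comm]

theorem hyp0F3Term_succ (a₁ a₂ a₃ w : ℂ) (k : ℕ) :
    hyp0F3Term a₁ a₂ a₃ w (k + 1) =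
      hyp0F3Term a₁ a₂ a₃ w k * (w / ((a₁ + k) * (a₂ + k) * (a₃ + k) * (k + 1 : ℕ))) := by
  simp only [hyp0F3Term, poch_succ, Nat.factorial_succ, Nat.cast_mul,
    pow_succ, div_eq_mul_inv, mul_inv]
  ring

theorem natCast_le_norm_add_natCast {a : ℂ} (ha : 0 ≤ a.re) (k : ℕ) : (k : ℝ) ≤ ‖a + k‖ :=
  calc (k : ℝ) ≤ (a + k).re := by simp [ha]
    _ ≤ ‖a + k‖ := Complex.re_le_norm _

theorem eventually_hyp0F3Term_ratio_le_half {a₁ a₂ a₃ : ℂ} (h₁ : 0 ≤ a₁.re) (h₂ : 0 ≤ a₂.re)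
    (h₃ : 0 ≤ a₃.re) (w : ℂ) (x : ℝ) :
    ∀ᶠ k : ℕ in atTop, ‖w‖ * ((x + 2 * k + 1) * (x + 2 * k)) ≤
      1 / 2 * (‖a₁ + k‖ * ‖a₂ + k‖ * ‖a₃ + k‖ * (k + 1)) := by
  filter_upwards [tendsto_natCast_atTop_atTop.eventually_ge_atTop (max (|x| + 1) (18 * ‖w‖))]
    with k hk
  have hx : |x| + 1 ≤ k := le_of_max_le_left hk
  have hw : 18 * ‖w‖ ≤ k := le_of_max_le_right hk
  calc ‖w‖ * ((x + 2 * k + 1) * (x + 2 * k)) ≤ ‖w‖ * (9 * k ^ 2) :=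
        mul_le_mul_of_nonneg_left (by nlinarith [neg_abs_le x, le_abs_self x]) (norm_nonneg w)
    _ ≤ k / 18 * (9 * k ^ 2) := by gcongr; linarith
    _ = 1 / 2 * (k * k * k * 1) := by ring
    _ ≤ _ := by
      gcongr
      · exact natCast_le_norm_add_natCast h₁ k
      · exact natCast_le_norm_add_natCast h₂ k
      · exact natCast_le_norm_add_natCast h₃ k
      · linarith

theorem summable_norm_hyp0F3Term_mul_Gamma {a₁ a₂ a₃ : ℂ} (h₁ : 0 ≤ a₁.re) (h₂ : 0 ≤ a₂.re)
    (h₃ : 0 ≤ a₃.re) (w : ℂ) (x : ℝ) :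
    Summable fun k : ℕ => ‖hyp0F3Term a₁ a₂ a₃ w k‖ * Real.Gamma (x + 2 * k) := by
  refine summable_of_ratio_norm_eventually_le (r := 1 / 2) (by norm_num) ?_
  filter_upwards [eventually_hyp0F3Term_ratio_le_half h₁ h₂ h₃ w x,
    tendsto_natCast_atTop_atTop.eventually_gt_atTop (-x / 2)] with k hratio hk
  have hpos : 0 < x + 2 * k := by linarith
  have hG := Real.Gamma_pos_of_pos hpos
  have hT := norm_nonneg (hyp0F3Term a₁ a₂ a₃ w k)
  have hGamma : Real.Gamma (x + 2 * (k + 1 : ℕ)) =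
      (x + 2 * k + 1) * (x + 2 * k) * Real.Gamma (x + 2 * k) := by
    rw [Nat.cast_succ, show x + 2 * ((k : ℝ) + 1) = x + 2 * k + 1 + 1 by ring,
      Real.Gamma_add_one (by linarith), Real.Gamma_add_one hpos.ne', mul_assoc]
  rw [hGamma, Real.norm_of_nonneg (by positivity), Real.norm_of_nonneg (by positivity),
    hyp0F3Term_succ, norm_mul, norm_div, norm_mul, norm_mul, norm_mul, Complex.norm_natCast]
  push_cast
  calc ‖hyp0F3Term a₁ a₂ a₃ w k‖ * (‖w‖ / (‖a₁ + k‖ * ‖a₂ + k‖ * ‖a₃ + k‖ * (k + 1))) *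
        ((x + 2 * k + 1) * (x + 2 * k) * Real.Gamma (x + 2 * k))
      = ‖hyp0F3Term a₁ a₂ a₃ w k‖ * Real.Gamma (x + 2 * k) *
          (‖w‖ * ((x + 2 * k + 1) * (x + 2 * k)) /
            (‖a₁ + k‖ * ‖a₂ + k‖ * ‖a₃ + k‖ * (k + 1))) := by ring
    _ ≤ ‖hyp0F3Term a₁ a₂ a₃ w k‖ * Real.Gamma (x + 2 * k) * (1 / 2) := by
      refine mul_le_mul_of_nonneg_left ?_ (by positivity)
      exact div_le_of_le_mul₀ (by positivity) (by norm_num) (by linarith)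
    _ = 1 / 2 * (‖hyp0F3Term a₁ a₂ a₃ w k‖ * Real.Gamma (x + 2 * k)) := by ring

noncomputable def extGammaIntegrand (ρ s : ℂ) (t : ℝ) : ℂ :=
  (t : ℂ) ^ (s - 1) * Complex.exp (-(t : ℂ) - ρ / t)

theorem extGamma_eq_integral (ρ s : ℂ) :
    extGamma ρ s = ∫ t in Ioi (0 : ℝ), extGammaIntegrand ρ s t := rfl

theorem extGammaIntegrand_add_two_mul (ρ s : ℂ) {t : ℝ} (ht : 0 < t) (k : ℕ) :
    extGammaIntegrand ρ (s + 2 * k) t = ((t : ℂ) ^ 2) ^ k * extGammaIntegrand ρ s t := by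
  rw [extGammaIntegrand, extGammaIntegrand, show s + 2 * k - 1 = s - 1 + (2 * k : ℕ) by
    push_cast; ring, Complex.cpow_add _ _ (by exact_mod_cast ht.ne'), Complex.cpow_natCast,
    pow_mul]
  ring

theorem norm_extGammaIntegrand (ρ s : ℂ) {t : ℝ} (ht : 0 < t) :
    ‖extGammaIntegrand ρ s t‖ = t ^ (s.re - 1) * Real.exp (-t - ρ.re / t) := by
  rw [extGammaIntegrand, norm_mul, Complex.norm_cpow_eq_rpow_re_of_pos ht, Complex.norm_exp]
  simp [Complex.div_ofReal_re]

theorem exp_neg_le_factorial_div_pow {x : ℝ} (hx : 0 < x) (n : ℕ) :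
    Real.exp (-x) ≤ n.factorial / x ^ n := by
  rw [Real.exp_neg, ← inv_div]
  exact inv_anti₀ (by positivity) (Real.pow_div_factorial_le_exp x hx.le n)

theorem norm_extGammaIntegrand_le {ρ : ℂ} (hρ : 0 < ρ.re) (s : ℂ) {t : ℝ} (ht : 0 < t)
    (n : ℕ) :
    ‖extGammaIntegrand ρ s t‖ ≤
      n.factorial / ρ.re ^ n * (Real.exp (-t) * t ^ (s.re + n - 1)) := by
  have hexp := exp_neg_le_factorial_div_pow (div_pos hρ ht) n
  rw [norm_extGammaIntegrand ρ s ht, show -t - ρ.re / t = -t + -(ρ.re / t) by ring, Real.exp_add,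
    show s.re + n - 1 = s.re - 1 + n by ring, Real.rpow_add ht, Real.rpow_natCast]
  calc t ^ (s.re - 1) * (Real.exp (-t) * Real.exp (-(ρ.re / t)))
      ≤ t ^ (s.re - 1) * (Real.exp (-t) * (n.factorial / (ρ.re / t) ^ n)) := by gcongr
    _ = _ := by rw [div_pow]; field_simp

theorem integrableOn_extGammaIntegrand {ρ : ℂ} (hρ : 0 < ρ.re) (s : ℂ) :
    IntegrableOn (extGammaIntegrand ρ s) (Ioi 0) := by
  obtain ⟨n, hn⟩ := exists_nat_gt (-s.re)
  refine ((Real.GammaIntegral_convergent (by linarith : 0 < s.re + n)).const_mul _).mono' ?_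
    (ae_restrict_of_forall_mem measurableSet_Ioi fun t ht => norm_extGammaIntegrand_le hρ s ht n)
  refine ContinuousOn.aestronglyMeasurable (fun t ht => ?_) measurableSet_Ioi
  have ht : (0 : ℝ) < t := ht
  refine ContinuousAt.continuousWithinAt ?_
  unfold extGammaIntegrand
  fun_prop (disch := first | exact Or.inl (by simpa using ht) | exact_mod_cast ht.ne')

theorem integral_norm_extGammaIntegrand_le {ρ : ℂ} (hρ : 0 < ρ.re) (s : ℂ) {n : ℕ}
    (hn : 0 < s.re + n) :
    ∫ t in Ioi (0 : ℝ), ‖extGammaIntegrand ρ s t‖ ≤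
      n.factorial / ρ.re ^ n * Real.Gamma (s.re + n) := by
  rw [Real.Gamma_eq_integral hn, ← integral_const_mul]
  exact setIntegral_mono_on (integrableOn_extGammaIntegrand hρ s).norm
    ((Real.GammaIntegral_convergent hn).const_mul _) measurableSet_Ioi
    fun t ht => norm_extGammaIntegrand_le hρ s ht n

theorem integral_extGammaIntegrand_mul_tsum {ρ : ℂ} (hρ : 0 < ρ.re) (s : ℂ) (α : ℕ → ℂ)
    (hα : ∀ x : ℝ, Summable fun k : ℕ => ‖α k‖ * Real.Gamma (x + 2 * k)) :
    ∫ t in Ioi (0 : ℝ), extGammaIntegrand ρ s t * ∑' k, α k * ((t : ℂ) ^ 2) ^ k =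
      ∑' k, α k * extGamma ρ (s + 2 * k) := by
  have hre (k : ℕ) : (s + 2 * k).re = s.re + 2 * k := by simp
  obtain ⟨n, hn⟩ := exists_nat_gt (-s.re)
  have hint (k : ℕ) : Integrable (fun t => α k * extGammaIntegrand ρ (s + 2 * k) t)
      (volume.restrict (Ioi 0)) :=
    (integrableOn_extGammaIntegrand hρ _).const_mul _
  have hsum : Summable fun k : ℕ =>
      ∫ t in Ioi (0 : ℝ), ‖α k * extGammaIntegrand ρ (s + 2 * k) t‖ := by
    refine (((hα (s.re + n)).mul_left (n.factorial / ρ.re ^ n))).of_nonneg_of_le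
      (fun k => integral_nonneg fun t => norm_nonneg _) fun k => ?_
    have hk : 0 < (s + 2 * k).re + n := by
      rw [hre]; linarith [(by positivity : (0 : ℝ) ≤ 2 * k)]
    simp only [norm_mul, integral_const_mul]
    calc ‖α k‖ * ∫ t in Ioi (0 : ℝ), ‖extGammaIntegrand ρ (s + 2 * k) t‖
        ≤ ‖α k‖ * (n.factorial / ρ.re ^ n * Real.Gamma ((s + 2 * k).re + n)) :=
          mul_le_mul_of_nonneg_left (integral_norm_extGammaIntegrand_le hρ _ hk) (norm_nonneg _)
      _ = _ := by rw [hre, add_right_comm]; ring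
  calc ∫ t in Ioi (0 : ℝ), extGammaIntegrand ρ s t * ∑' k, α k * ((t : ℂ) ^ 2) ^ k
      = ∫ t in Ioi (0 : ℝ), ∑' k, α k * extGammaIntegrand ρ (s + 2 * k) t := by
        refine setIntegral_congr_fun measurableSet_Ioi fun t ht => ?_
        simp only [extGammaIntegrand_add_two_mul ρ s ht, ← tsum_mul_left]
        exact tsum_congr fun k => by ring
    _ = ∑' k, α k * extGamma ρ (s + 2 * k) := by
        rw [← integral_tsum_of_summable_integral_norm hint hsum]
        simp only [integral_const_mul, extGamma_eq_integral]

theorem unifiedG_term_eq (b c ρ : ℂ) {ν : ℂ} (hν : ∀ m : ℕ, ν + 1 ≠ -m) {z : ℂ} (hz : z ≠ 0)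
    (k : ℕ) :
    (-b) ^ k * genPoch c ρ (2 * k + ν) * (z / 2) ^ (2 * k + ν) /
        ((k.factorial : ℂ) * Complex.Gamma (ν + k + 1) * Complex.Gamma (ν + 2 * k + 1)) =
      (z / 2) ^ ν / (Complex.Gamma (ν + 1) ^ 2 * Complex.Gamma c) *
        (hyp0F3Term (ν + 1) ((ν + 1) / 2) ((ν + 2) / 2) (-b * z ^ 2 / 16) k *
          extGamma ρ (c + ν + 2 * k)) := by
  have hpow : (z / 2) ^ (2 * k + ν) = ((z / 2) ^ 2) ^ k * (z / 2) ^ ν := by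
    rw [Complex.cpow_add _ _ (div_ne_zero hz two_ne_zero),
      show (2 : ℂ) * k = (2 * k : ℕ) by push_cast; ring, Complex.cpow_natCast, pow_mul]
  rw [genPoch, hyp0F3Term, hpow, show ν + k + 1 = ν + 1 + k by ring,
    Gamma_add_natCast (Complex.Gamma_ne_zero hν), show ν + 2 * k + 1 = ν + 1 + 2 * k by ring,
    Gamma_add_two_mul_natCast hν, show (ν + 1 + 1) / 2 = (ν + 2) / 2 by ring,
    show c + (2 * k + ν) = c + ν + 2 * k by ring,
    show (-b * z ^ 2 / 16) ^ k = (-b) ^ k * ((z / 2) ^ 2) ^ k / 4 ^ k by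
      rw [← mul_pow, ← div_pow]; ring]
  simp only [div_eq_mul_inv, mul_inv]
  ring

end UnifiedBessel

open UnifiedBessel in
theorem stmt2_general (b c ν ρ : ℂ) (hρ : 0 < ρ.re) (hν : -1 < ν.re)
    (z : ℝ) (hz : 0 < z) :
    unifiedG b c ν ρ (z:ℂ) =
      ((z:ℂ) / 2) ^ ν / (Complex.Gamma (ν + 1) ^ 2 * Complex.Gamma c) *
        ∫ t in Ioi (0:ℝ), (t:ℂ) ^ (c + ν - 1) * Complex.exp (-(t:ℂ) - ρ / (t:ℂ)) *
          hyp0F3 (ν + 1) ((ν + 1) / 2) ((ν + 2) / 2) (-b * (z:ℂ) ^ 2 * (t:ℂ) ^ 2 / 16) := by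
  have hν₁ : ∀ m : ℕ, ν + 1 ≠ -m := fun m h => by
    have := congrArg Complex.re h
    simp only [add_re, one_re, neg_re, natCast_re] at this
    linarith [m.cast_nonneg (α := ℝ)]
  have hsummable := summable_norm_hyp0F3Term_mul_Gamma (a₁ := ν + 1) (a₂ := (ν + 1) / 2)
    (a₃ := (ν + 2) / 2) (by simp only [add_re, one_re]; linarith)
    (by simp only [div_ofNat_re, add_re, one_re]; linarith)
    (by simp only [div_ofNat_re, add_re, re_ofNat]; linarith) (-b * (z : ℂ) ^ 2 / 16)
  have hintegrand (t : ℝ) : (t : ℂ) ^ (c + ν - 1) * Complex.exp (-(t : ℂ) - ρ / t) *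
      hyp0F3 (ν + 1) ((ν + 1) / 2) ((ν + 2) / 2) (-b * (z : ℂ) ^ 2 * (t : ℂ) ^ 2 / 16) =
      extGammaIntegrand ρ (c + ν) t * ∑' k, hyp0F3Term (ν + 1) ((ν + 1) / 2) ((ν + 2) / 2)
        (-b * (z : ℂ) ^ 2 / 16) k * ((t : ℂ) ^ 2) ^ k := by
    rw [show -b * (z : ℂ) ^ 2 * (t : ℂ) ^ 2 / 16 = -b * (z : ℂ) ^ 2 / 16 * (t : ℂ) ^ 2 by ring,
      hyp0F3_eq_tsum]
    simp only [hyp0F3Term_mul, extGammaIntegrand]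
  simp only [hintegrand]
  rw [integral_extGammaIntegrand_mul_tsum hρ _ _ hsummable, unifiedG, ← tsum_mul_left]
  exact tsum_congr (unifiedG_term_eq b c ρ hν₁ (Complex.ofReal_ne_zero.mpr hz.ne'))

theorem stmt2 (b c ν ρ : ℂ) (hρ : 0 < ρ.re) (hc : 0 < c.re) (hν : -1 < ν.re)
    (z : ℝ) (hz : 0 < z) :
    unifiedG b c ν ρ (z:ℂ) =
      ((z:ℂ) / 2) ^ ν / (Complex.Gamma (ν + 1) ^ 2 * Complex.Gamma c) *
        ∫ t in Ioi (0:ℝ), (t:ℂ) ^ (c + ν - 1) * Complex.exp (-(t:ℂ) - ρ / (t:ℂ)) *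
          hyp0F3 (ν + 1) ((ν + 1) / 2) ((ν + 2) / 2) (-b * (z:ℂ) ^ 2 * (t:ℂ) ^ 2 / 16) :=
  stmt2_general b c ν ρ hρ hν z hz
end

section
/- Let b, c, ν, ρ ∈ ℂ with Re(ρ) > 0, Re(c) > 0 and Re(ν) > -1, and let z > 0 be real. Then G_ν^{(b,c)}(z;ρ) = (z/2)^ν / (Γ(ν+1)² Γ(c)) · ∫_0^1 u^{c+ν-1} (1-u)^{-c-ν-1} · exp( -(u² + ρ(1-u)²) / (u(1-u)) ) · ₀F₃(-; ν+1, (ν+1)/2, (ν+2)/2; -b z² u² / (16(1-u)²)) du, the integral being over real u ∈ (0,1). -/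
open Complex MeasureTheory Real Set

/-!
Writing `(c;ρ)_{2k+ν} Γ(c) = Γ_ρ(c+ν+2k) = ∫₀^∞ t^{c+ν+2k-1} e^{-t-ρ/t} dt` and
`Γ(ν+2k+1) = Γ(ν+1) 4^k ((ν+1)/2)_k ((ν+2)/2)_k` (Legendre duplication), the series defining
`G` becomes the termwise integral of `t^{c+ν-1} e^{-t-ρ/t} ₀F₃(…; -b z² t²/16)` over `(0, ∞)`.
The interchange of sum and integral is justified by absolute convergence: the `k`-th absolute
integral grows at most like `(m+2k)! ≤ 2^m m! 16^k (k!)²`, while the `₀F₃` denominators grow like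
`(k!)⁴`. The substitution `t = u/(1-u)` then gives the integral over `(0, 1)`.
-/

open scoped Nat

theorem Real.exp_neg_le_factorial_div_pow {x : ℝ} (hx : 0 < x) (n : ℕ) :
    Real.exp (-x) ≤ n ! / x ^ n := by
  rw [Real.exp_neg, inv_le_comm₀ (Real.exp_pos x) (by positivity), inv_div]
  exact Real.pow_div_factorial_le_exp x hx.le n

theorem Real.rpow_le_rpow_add_rpow {t x y z : ℝ} (ht : 0 < t) (hxy : x ≤ y) (hyz : y ≤ z) :
    t ^ y ≤ t ^ x + t ^ z := by
  rcases le_total t 1 with h | h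
  · linarith [Real.rpow_le_rpow_of_exponent_ge ht h hxy, Real.rpow_nonneg ht.le z]
  · linarith [Real.rpow_le_rpow_of_exponent_le h hyz, Real.rpow_nonneg ht.le x]

theorem Nat.factorial_add_le_two_pow_mul (i j : ℕ) : (i + j)! ≤ 2 ^ (i + j) * i ! * j ! := by
  rw [← Nat.add_choose_mul_factorial_mul_factorial i j, mul_assoc, mul_assoc, mul_comm i !]
  exact Nat.mul_le_mul_right _ (Nat.choose_le_two_pow _ _)

theorem summable_pow_mul_factorial_div_factorial_pow_four {r : ℝ} (hr : 0 ≤ r) (m : ℕ) :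
    Summable fun k : ℕ => r ^ k * (m + 2 * k)! / (k ! : ℝ) ^ 4 := by
  have hfact (k : ℕ) : ((m + 2 * k)! : ℝ) ≤ 2 ^ m * m ! * 16 ^ k * (k ! : ℝ) ^ 2 := by
    have h₁ := Nat.factorial_add_le_two_pow_mul m (2 * k)
    have h₂ := Nat.factorial_add_le_two_pow_mul k k
    rw [← two_mul] at h₂
    have h : (m + 2 * k)! ≤ 2 ^ m * m ! * 16 ^ k * k ! ^ 2 :=
      calc (m + 2 * k)! ≤ 2 ^ (m + 2 * k) * m ! * (2 ^ (2 * k) * k ! * k !) :=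
            h₁.trans (Nat.mul_le_mul_left _ h₂)
        _ = 2 ^ m * m ! * 16 ^ k * k ! ^ 2 := by
            rw [show (16:ℕ) = 2 ^ 4 by norm_num, ← pow_mul]; ring_nf
    exact_mod_cast h
  refine Summable.of_nonneg_of_le (fun k => by positivity) (fun k => ?_)
    ((Real.summable_pow_div_factorial (16 * r)).mul_left (2 ^ m * m ! : ℝ))
  have hk : (1:ℝ) ≤ k ! := by exact_mod_cast k.factorial_pos
  calc r ^ k * (m + 2 * k)! / (k ! : ℝ) ^ 4
      ≤ r ^ k * (2 ^ m * m ! * 16 ^ k * (k ! : ℝ) ^ 2) / (k ! : ℝ) ^ 4 := by gcongr; exact hfact k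
    _ = 2 ^ m * m ! * ((16 * r) ^ k / (k ! : ℝ) ^ 2) := by field_simp; ring
    _ ≤ 2 ^ m * m ! * ((16 * r) ^ k / k !) := by gcongr; nlinarith

theorem image_div_one_sub_Ioo : (fun u : ℝ => u / (1 - u)) '' Ioo 0 1 = Ioi 0 := by
  ext t
  constructor
  · rintro ⟨u, ⟨hu0, hu1⟩, rfl⟩
    exact div_pos hu0 (by linarith)
  · intro (ht : 0 < t)
    refine ⟨t / (1 + t), ⟨by positivity, by rw [div_lt_one (by positivity)]; linarith⟩, ?_⟩
    field_simp
    ring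

theorem integral_Ioi_eq_integral_Ioo_div_one_sub {E : Type*} [NormedAddCommGroup E]
    [NormedSpace ℝ E] (g : ℝ → E) :
    ∫ t in Ioi 0, g t = ∫ u in Ioo 0 1, ((1 - u) ^ 2)⁻¹ • g (u / (1 - u)) := by
  have hderiv : ∀ u ∈ Ioo (0:ℝ) 1,
      HasDerivWithinAt (fun u : ℝ => u / (1 - u)) ((1 - u) ^ 2)⁻¹ (Ioo 0 1) u := by
    rintro u ⟨-, hu1⟩
    have h := (hasDerivAt_id u).div ((hasDerivAt_id u).const_sub 1) (sub_ne_zero.2 hu1.ne')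
    exact (h.congr_deriv (by simp only [id]; ring)).hasDerivWithinAt
  have hinj : InjOn (fun u : ℝ => u / (1 - u)) (Ioo 0 1) := by
    rintro u ⟨-, hu1⟩ v ⟨-, hv1⟩ (h : u / (1 - u) = v / (1 - v))
    rw [div_eq_div_iff (sub_ne_zero.2 hu1.ne') (sub_ne_zero.2 hv1.ne')] at h
    linarith
  rw [← image_div_one_sub_Ioo,
    integral_image_eq_integral_abs_deriv_smul measurableSet_Ioo hderiv hinj]
  simp only [abs_inv, abs_sq]

noncomputable def extGammaIntegrand (ρ x : ℂ) (t : ℝ) : ℂ :=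
  (t:ℂ) ^ (x - 1) * Complex.exp (-(t:ℂ) - ρ / (t:ℂ))

noncomputable def realExtGammaIntegrand (p a t : ℝ) : ℝ :=
  t ^ (a - 1) * Real.exp (-t - p / t)

noncomputable def realExtGamma (p a : ℝ) : ℝ :=
  ∫ t in Ioi 0, realExtGammaIntegrand p a t

theorem extGamma_eq_integral_extGammaIntegrand (ρ x : ℂ) :
    extGamma ρ x = ∫ t in Ioi 0, extGammaIntegrand ρ x t := rfl

theorem norm_extGammaIntegrand (ρ x : ℂ) {t : ℝ} (ht : 0 < t) :
    ‖extGammaIntegrand ρ x t‖ = realExtGammaIntegrand ρ.re x.re t := by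
  simp [extGammaIntegrand, realExtGammaIntegrand, Complex.norm_cpow_eq_rpow_re_of_pos ht,
    Complex.norm_exp]

theorem extGammaIntegrand_add_natCast (ρ x : ℂ) (n : ℕ) {t : ℝ} (ht : 0 < t) :
    extGammaIntegrand ρ (x + n) t = (t:ℂ) ^ n * extGammaIntegrand ρ x t := by
  rw [extGammaIntegrand, extGammaIntegrand, add_sub_right_comm,
    Complex.cpow_add _ _ (Complex.ofReal_ne_zero.2 ht.ne'), Complex.cpow_natCast]
  ring

theorem measurable_realExtGammaIntegrand (p a : ℝ) : Measurable (realExtGammaIntegrand p a) := by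
  unfold realExtGammaIntegrand; fun_prop

theorem measurable_extGammaIntegrand (ρ x : ℂ) : Measurable (extGammaIntegrand ρ x) := by
  unfold extGammaIntegrand; fun_prop

theorem integrableOn_realExtGammaIntegrand {p : ℝ} (hp : 0 < p) (a : ℝ) :
    IntegrableOn (realExtGammaIntegrand p a) (Ioi 0) := by
  -- `e^{-p/t} ≤ n! (t/p)^n` absorbs the singularity of `t^(a-1)` at `0`
  obtain ⟨n, hn⟩ : ∃ n : ℕ, 1 - a ≤ n := ⟨⌈1 - a⌉₊, Nat.le_ceil _⟩
  have hbound := (Real.GammaIntegral_convergent (s := a + n) (by linarith)).const_mul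
    (n ! / p ^ n)
  refine hbound.mono' (measurable_realExtGammaIntegrand p a).aestronglyMeasurable ?_
  filter_upwards [ae_restrict_mem measurableSet_Ioi] with t (ht : 0 < t)
  rw [Real.norm_of_nonneg (by unfold realExtGammaIntegrand; positivity)]
  calc t ^ (a - 1) * Real.exp (-t - p / t)
      = t ^ (a - 1) * (Real.exp (-t) * Real.exp (-(p / t))) := by
        rw [← Real.exp_add, ← sub_eq_add_neg]
    _ ≤ t ^ (a - 1) * (Real.exp (-t) * (n ! / (p / t) ^ n)) := by
        gcongr; exact exp_neg_le_factorial_div_pow (div_pos hp ht) n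
    _ = n ! / p ^ n * (Real.exp (-t) * t ^ (a + n - 1)) := by
        rw [add_sub_right_comm, Real.rpow_add ht, Real.rpow_natCast, div_pow]
        field_simp

theorem integrableOn_extGammaIntegrand {ρ : ℂ} (hρ : 0 < ρ.re) (x : ℂ) :
    IntegrableOn (extGammaIntegrand ρ x) (Ioi 0) := by
  refine (integrableOn_realExtGammaIntegrand hρ x.re).mono'
    (measurable_extGammaIntegrand ρ x).aestronglyMeasurable ?_
  filter_upwards [ae_restrict_mem measurableSet_Ioi] with t (ht : 0 < t)
  exact (norm_extGammaIntegrand ρ x ht).le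

theorem realExtGamma_le_add_factorial {p : ℝ} (hp : 0 < p) {a s : ℝ} (n : ℕ)
    (has : a ≤ s) (hsn : s ≤ n + 1) :
    realExtGamma p s ≤ realExtGamma p a + n ! := by
  have hn : (0:ℝ) < n + 1 := by positivity
  rw [← Real.Gamma_nat_eq_factorial, Real.Gamma_eq_integral hn, realExtGamma, realExtGamma,
    ← integral_add (integrableOn_realExtGammaIntegrand hp a) (Real.GammaIntegral_convergent hn)]
  refine setIntegral_mono_on (integrableOn_realExtGammaIntegrand hp s)
    ((integrableOn_realExtGammaIntegrand hp a).add (Real.GammaIntegral_convergent hn))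
    measurableSet_Ioi fun t (ht : 0 < t) => ?_
  have hexp : Real.exp (-t - p / t) ≤ Real.exp (-t) := by
    gcongr; linarith [div_pos hp ht]
  have hpow := rpow_le_rpow_add_rpow ht (sub_le_sub_right has 1) (sub_le_sub_right hsn 1)
  simp only [realExtGammaIntegrand]
  nlinarith [Real.rpow_nonneg ht.le (a - 1), Real.rpow_nonneg ht.le ((n:ℝ) + 1 - 1),
    Real.exp_pos (-t - p / t), Real.exp_pos (-t)]

theorem realExtGamma_nonneg (p a : ℝ) : 0 ≤ realExtGamma p a :=
  setIntegral_nonneg measurableSet_Ioi fun t (ht : 0 < t) => by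
    unfold realExtGammaIntegrand; positivity

theorem add_natCast_ne_zero_of_re_pos {a : ℂ} (ha : 0 < a.re) (k : ℕ) : a + k ≠ 0 := by
  refine ne_of_apply_ne Complex.re (ne_of_gt ?_)
  simp only [Complex.add_re, Complex.natCast_re, Complex.zero_re]
  positivity

theorem Gamma_add_natCast_eq_mul_poch {a : ℂ} (ha : Complex.Gamma a ≠ 0) (k : ℕ) :
    Complex.Gamma (a + k) = Complex.Gamma a * poch a k :=
  (mul_div_cancel₀ _ ha).symm

theorem poch_zero {a : ℂ} (ha : Complex.Gamma a ≠ 0) : poch a 0 = 1 := by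
  rw [poch, Nat.cast_zero, add_zero, div_self ha]

theorem poch_succ (a : ℂ) (k : ℕ) (h : a + k ≠ 0) : poch a (k + 1) = poch a k * (a + k) := by
  rw [poch, poch, Nat.cast_succ, ← add_assoc, Complex.Gamma_add_one _ h]
  ring

theorem pow_mul_factorial_le_norm_poch {a : ℂ} {δ : ℝ} (hδ : 0 < δ) (hδ₁ : δ ≤ 1)
    (hδa : δ ≤ a.re) (k : ℕ) : δ ^ k * k ! ≤ ‖poch a k‖ := by
  have ha : 0 < a.re := hδ.trans_le hδa
  induction k with
  | zero => simp [poch_zero (Complex.Gamma_ne_zero_of_re_pos ha)]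
  | succ k ih =>
    have hterm : δ * (k + 1) ≤ ‖a + k‖ := by
      refine le_trans ?_ (Complex.re_le_norm _)
      simp only [Complex.add_re, Complex.natCast_re]
      nlinarith [(Nat.cast_nonneg k : (0:ℝ) ≤ k)]
    rw [poch_succ a k (add_natCast_ne_zero_of_re_pos ha k), norm_mul, pow_succ,
      Nat.factorial_succ, Nat.cast_mul, Nat.cast_succ]
    calc δ ^ k * δ * ((k + 1) * k !) = (δ ^ k * k !) * (δ * (k + 1)) := by ring
      _ ≤ ‖poch a k‖ * ‖a + k‖ := by gcongr

theorem poch_two_mul {a : ℂ} (ha : 0 < a.re) (k : ℕ) :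
    poch a (2 * k) = 4 ^ k * poch (a / 2) k * poch ((a + 1) / 2) k := by
  have ha₁ : 0 < (a / 2).re := by simp; positivity
  have ha₂ : 0 < ((a + 1) / 2).re := by simp; positivity
  induction k with
  | zero =>
    simp [poch_zero (Complex.Gamma_ne_zero_of_re_pos ha),
      poch_zero (Complex.Gamma_ne_zero_of_re_pos ha₁),
      poch_zero (Complex.Gamma_ne_zero_of_re_pos ha₂)]
  | succ k ih =>
    rw [show 2 * (k + 1) = 2 * k + 1 + 1 by ring,
      poch_succ _ _ (add_natCast_ne_zero_of_re_pos ha _),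
      poch_succ _ _ (add_natCast_ne_zero_of_re_pos ha _), ih,
      poch_succ _ _ (add_natCast_ne_zero_of_re_pos ha₁ _),
      poch_succ _ _ (add_natCast_ne_zero_of_re_pos ha₂ _)]
    push_cast
    ring

noncomputable def hyp0F3Denom (a₁ a₂ a₃ : ℂ) (k : ℕ) : ℂ :=
  poch a₁ k * poch a₂ k * poch a₃ k * k !

theorem hyp0F3_eq_tsum (a₁ a₂ a₃ w : ℂ) :
    hyp0F3 a₁ a₂ a₃ w = ∑' k : ℕ, w ^ k / hyp0F3Denom a₁ a₂ a₃ k := rfl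

section Hyp0F3

variable {a₁ a₂ a₃ : ℂ}

theorem exists_pow_mul_factorial_pow_le_norm_hyp0F3Denom (h₁ : 0 < a₁.re) (h₂ : 0 < a₂.re)
    (h₃ : 0 < a₃.re) :
    ∃ δ > (0:ℝ), ∀ k, δ ^ k * (k ! : ℝ) ^ 4 ≤ ‖hyp0F3Denom a₁ a₂ a₃ k‖ := by
  set δ := min (min a₁.re a₂.re) (min a₃.re 1)
  have hδ : 0 < δ := by positivity
  refine ⟨δ ^ 3, by positivity, fun k => ?_⟩
  have hδ₁ : δ ≤ 1 := (min_le_right _ _).trans (min_le_right _ _)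
  have e₁ := pow_mul_factorial_le_norm_poch hδ hδ₁ ((min_le_left _ _).trans (min_le_left _ _)) k
  have e₂ := pow_mul_factorial_le_norm_poch hδ hδ₁ ((min_le_left _ _).trans (min_le_right _ _)) k
  have e₃ := pow_mul_factorial_le_norm_poch hδ hδ₁ ((min_le_right _ _).trans (min_le_left _ _)) k
  rw [hyp0F3Denom, norm_mul, norm_mul, norm_mul, Complex.norm_natCast]
  calc (δ ^ 3) ^ k * (k ! : ℝ) ^ 4 = (δ ^ k * k !) * (δ ^ k * k !) * (δ ^ k * k !) * k ! := by
        ring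
    _ ≤ _ := by gcongr

theorem summable_norm_div_hyp0F3Denom_mul_realExtGamma (h₁ : 0 < a₁.re) (h₂ : 0 < a₂.re)
    (h₃ : 0 < a₃.re) {p : ℝ} (hp : 0 < p) (a : ℝ) (w : ℂ) :
    Summable fun k : ℕ => ‖w ^ k / hyp0F3Denom a₁ a₂ a₃ k‖ * realExtGamma p (a + 2 * k) := by
  obtain ⟨δ, hδ, hD⟩ := exists_pow_mul_factorial_pow_le_norm_hyp0F3Denom h₁ h₂ h₃
  obtain ⟨m, hm⟩ : ∃ m : ℕ, a ≤ m := ⟨⌈a⌉₊, Nat.le_ceil a⟩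
  set G₀ := realExtGamma p a
  refine Summable.of_nonneg_of_le (fun k => mul_nonneg (norm_nonneg _) (realExtGamma_nonneg _ _))
    (fun k => ?_)
    ((summable_pow_mul_factorial_div_factorial_pow_four (r := ‖w‖ / δ) (by positivity) m).mul_left
      (G₀ + 1))
  have hcoeff : ‖w ^ k / hyp0F3Denom a₁ a₂ a₃ k‖ ≤ (‖w‖ / δ) ^ k / (k ! : ℝ) ^ 4 := by
    rw [norm_div, norm_pow, div_pow, div_div]
    gcongr
    exact hD k
  have hGamma : realExtGamma p (a + 2 * k) ≤ (G₀ + 1) * (m + 2 * k)! := by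
    have h := realExtGamma_le_add_factorial hp (m + 2 * k)
      (le_add_of_nonneg_right (by positivity) : a ≤ a + 2 * k) (by push_cast; linarith)
    have h₁ : (1:ℝ) ≤ (m + 2 * k)! := by exact_mod_cast (m + 2 * k).factorial_pos
    nlinarith [realExtGamma_nonneg p a]
  calc ‖w ^ k / hyp0F3Denom a₁ a₂ a₃ k‖ * realExtGamma p (a + 2 * k)
      ≤ (‖w‖ / δ) ^ k / (k ! : ℝ) ^ 4 * ((G₀ + 1) * (m + 2 * k)!) :=
        mul_le_mul hcoeff hGamma (realExtGamma_nonneg _ _) (by positivity)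
    _ = (G₀ + 1) * ((‖w‖ / δ) ^ k * (m + 2 * k)! / (k ! : ℝ) ^ 4) := by ring

end Hyp0F3

theorem integral_tsum_mul_extGammaIntegrand {ρ : ℂ} (hρ : 0 < ρ.re) (a s : ℕ → ℂ)
    (h : Summable fun k => ‖a k‖ * realExtGamma ρ.re (s k).re) :
    ∫ t in Ioi 0, ∑' k, a k * extGammaIntegrand ρ (s k) t = ∑' k, a k * extGamma ρ (s k) := by
  have hnorm (k : ℕ) : ∫ t in Ioi 0, ‖a k * extGammaIntegrand ρ (s k) t‖ =
      ‖a k‖ * realExtGamma ρ.re (s k).re := by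
    simp_rw [norm_mul]
    rw [integral_const_mul, realExtGamma]
    congr 1
    exact setIntegral_congr_fun measurableSet_Ioi fun t ht => norm_extGammaIntegrand ρ _ ht
  rw [← integral_tsum_of_summable_integral_norm
    (fun k => (integrableOn_extGammaIntegrand hρ (s k)).const_mul (a k))
    (by simpa only [hnorm] using h)]
  simp_rw [integral_const_mul, extGamma_eq_integral_extGammaIntegrand]

theorem extGammaIntegrand_mul_hyp0F3 (ρ x a₁ a₂ a₃ w : ℂ) {t : ℝ} (ht : 0 < t) :
    extGammaIntegrand ρ x t * hyp0F3 a₁ a₂ a₃ (w * (t:ℂ) ^ 2) =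
      ∑' k : ℕ, w ^ k / hyp0F3Denom a₁ a₂ a₃ k * extGammaIntegrand ρ (x + (2 * k : ℕ)) t := by
  rw [hyp0F3_eq_tsum, ← tsum_mul_left]
  congr 1 with k
  rw [extGammaIntegrand_add_natCast ρ x _ ht, mul_pow, pow_mul']
  ring

theorem integral_extGammaIntegrand_mul_hyp0F3 {ρ : ℂ} (hρ : 0 < ρ.re) (x : ℂ) {a₁ a₂ a₃ : ℂ}
    (h₁ : 0 < a₁.re) (h₂ : 0 < a₂.re) (h₃ : 0 < a₃.re) (w : ℂ) :
    ∫ t in Ioi 0, extGammaIntegrand ρ x t * hyp0F3 a₁ a₂ a₃ (w * (t:ℂ) ^ 2) =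
      ∑' k : ℕ, w ^ k / hyp0F3Denom a₁ a₂ a₃ k * extGamma ρ (x + (2 * k : ℕ)) := by
  rw [setIntegral_congr_fun measurableSet_Ioi fun t ht =>
    extGammaIntegrand_mul_hyp0F3 ρ x a₁ a₂ a₃ w ht]
  refine integral_tsum_mul_extGammaIntegrand hρ _ _ ?_
  simpa using summable_norm_div_hyp0F3Denom_mul_realExtGamma h₁ h₂ h₃ hρ x.re w

theorem integral_Ioo_eq_integral_extGammaIntegrand (ρ x : ℂ) (f : ℂ → ℂ) :
    ∫ u in Ioo (0:ℝ) 1, (u:ℂ) ^ (x - 1) * (1 - (u:ℂ)) ^ (-x - 1) *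
        Complex.exp (-((u:ℂ) ^ 2 + ρ * (1 - (u:ℂ)) ^ 2) / ((u:ℂ) * (1 - (u:ℂ)))) *
        f ((u:ℂ) ^ 2 / (1 - (u:ℂ)) ^ 2) =
      ∫ t in Ioi 0, extGammaIntegrand ρ x t * f ((t:ℂ) ^ 2) := by
  rw [integral_Ioi_eq_integral_Ioo_div_one_sub]
  refine setIntegral_congr_fun measurableSet_Ioo fun u ⟨hu0, hu1⟩ => ?_
  have hv : 0 < 1 - u := sub_pos.2 hu1
  have hU : (u:ℂ) ≠ 0 := Complex.ofReal_ne_zero.2 hu0.ne'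
  have hV : (1 - (u:ℂ)) ≠ 0 := by exact_mod_cast hv.ne'
  have hcpow : (1 - (u:ℂ)) ^ (-x - 1) = ((1 - (u:ℂ)) ^ (x - 1))⁻¹ / (1 - (u:ℂ)) ^ 2 := by
    rw [show -x - 1 = -(x - 1) - 2 by ring, Complex.cpow_sub _ _ hV, Complex.cpow_neg]
    norm_cast
  have hexp : -((u:ℂ) ^ 2 + ρ * (1 - (u:ℂ)) ^ 2) / ((u:ℂ) * (1 - (u:ℂ))) =
      -((u:ℂ) / (1 - u)) - ρ / ((u:ℂ) / (1 - u)) := by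
    field_simp
    ring
  have hdiv : ((u:ℂ) / (1 - u)) ^ (x - 1) = (u:ℂ) ^ (x - 1) / (1 - (u:ℂ)) ^ (x - 1) := by
    exact_mod_cast div_cpow_ofReal_nonneg hu0.le hv.le (x - 1)
  simp only [extGammaIntegrand, Complex.real_smul]
  push_cast
  rw [hdiv, hcpow, hexp, div_pow]
  ring

theorem unifiedG_term_eq (b c ν ρ : ℂ) (hν : 0 < (ν + 1).re) {z : ℂ} (hz : z ≠ 0) (k : ℕ) :
    (-b) ^ k * genPoch c ρ (2 * k + ν) * (z / 2) ^ (2 * (k:ℂ) + ν) /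
        (k ! * Complex.Gamma (ν + k + 1) * Complex.Gamma (ν + 2 * k + 1)) =
      (z / 2) ^ ν / (Complex.Gamma (ν + 1) ^ 2 * Complex.Gamma c) *
        ((-b * z ^ 2 / 16) ^ k / hyp0F3Denom (ν + 1) ((ν + 1) / 2) ((ν + 2) / 2) k *
          extGamma ρ (c + ν + (2 * k : ℕ))) := by
  have hΓ := Complex.Gamma_ne_zero_of_re_pos hν
  have hΓk : Complex.Gamma (ν + k + 1) = Complex.Gamma (ν + 1) * poch (ν + 1) k := by
    rw [← Gamma_add_natCast_eq_mul_poch hΓ, add_right_comm]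
  have hΓ2k : Complex.Gamma (ν + 2 * k + 1) =
      Complex.Gamma (ν + 1) * 4 ^ k * poch ((ν + 1) / 2) k * poch ((ν + 2) / 2) k := by
    rw [show ν + 2 * k + 1 = ν + 1 + (2 * k : ℕ) by push_cast; ring,
      Gamma_add_natCast_eq_mul_poch hΓ,
      poch_two_mul hν, show ν + 1 + 1 = ν + 2 by ring]
    ring
  have hpow : (z / 2) ^ (2 * (k:ℂ) + ν) = (z ^ 2 / 4) ^ k * (z / 2) ^ ν := by
    rw [Complex.cpow_add _ _ (div_ne_zero hz two_ne_zero),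
      show 2 * (k:ℂ) = (2 * k : ℕ) by push_cast; ring, Complex.cpow_natCast, pow_mul]
    ring
  have hw : (-b * z ^ 2 / 16) ^ k = (-b) ^ k * (z ^ 2 / 4) ^ k / 4 ^ k := by
    rw [show -b * z ^ 2 / 16 = -b * (z ^ 2 / 4) / 4 by ring, div_pow, mul_pow]
  rw [genPoch, hΓk, hΓ2k, hpow, hw, hyp0F3Denom, show c + (2 * k + ν) = c + ν + (2 * k : ℕ) by
    push_cast; ring]
  field_simp

theorem stmt3_general (b c ν ρ : ℂ) (hρ : 0 < ρ.re) (hν : -1 < ν.re)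
    (z : ℝ) (hz : 0 < z) :
    unifiedG b c ν ρ (z:ℂ) =
      ((z:ℂ) / 2) ^ ν / (Complex.Gamma (ν + 1) ^ 2 * Complex.Gamma c) *
        ∫ u in Ioo (0:ℝ) 1, (u:ℂ) ^ (c + ν - 1) * ((1:ℂ) - (u:ℂ)) ^ (-c - ν - 1) *
          Complex.exp (-((u:ℂ) ^ 2 + ρ * ((1:ℂ) - (u:ℂ)) ^ 2) / ((u:ℂ) * ((1:ℂ) - (u:ℂ)))) *
          hyp0F3 (ν + 1) ((ν + 1) / 2) ((ν + 2) / 2)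
            (-b * (z:ℂ) ^ 2 * (u:ℂ) ^ 2 / (16 * ((1:ℂ) - (u:ℂ)) ^ 2)) := by
  have h₁ : 0 < (ν + 1).re := by simp; linarith
  have h₂ : 0 < ((ν + 1) / 2).re := by simp; linarith
  have h₃ : 0 < ((ν + 2) / 2).re := by simp; linarith
  have hsubst := integral_Ioo_eq_integral_extGammaIntegrand ρ (c + ν)
    fun y => hyp0F3 (ν + 1) ((ν + 1) / 2) ((ν + 2) / 2) (-b * z ^ 2 / 16 * y)
  have harg (u : ℝ) : -b * (z:ℂ) ^ 2 * (u:ℂ) ^ 2 / (16 * (1 - (u:ℂ)) ^ 2) =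
      -b * z ^ 2 / 16 * ((u:ℂ) ^ 2 / (1 - (u:ℂ)) ^ 2) :=
    mul_div_mul_comm _ _ _ _
  beta_reduce at hsubst
  simp only [harg]
  rw [show -c - ν - 1 = -(c + ν) - 1 by ring, hsubst,
    integral_extGammaIntegrand_mul_hyp0F3 hρ _ h₁ h₂ h₃, unifiedG, ← tsum_mul_left]
  exact tsum_congr fun k => unifiedG_term_eq b c ν ρ h₁ (by exact_mod_cast hz.ne') k

theorem stmt3 (b c ν ρ : ℂ) (hρ : 0 < ρ.re) (hc : 0 < c.re) (hν : -1 < ν.re)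
    (z : ℝ) (hz : 0 < z) :
    unifiedG b c ν ρ (z:ℂ) =
      ((z:ℂ) / 2) ^ ν / (Complex.Gamma (ν + 1) ^ 2 * Complex.Gamma c) *
        ∫ u in Ioo (0:ℝ) 1, (u:ℂ) ^ (c + ν - 1) * ((1:ℂ) - (u:ℂ)) ^ (-c - ν - 1) *
          Complex.exp (-((u:ℂ) ^ 2 + ρ * ((1:ℂ) - (u:ℂ)) ^ 2) / ((u:ℂ) * ((1:ℂ) - (u:ℂ)))) *
          hyp0F3 (ν + 1) ((ν + 1) / 2) ((ν + 2) / 2)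
            (-b * (z:ℂ) ^ 2 * (u:ℂ) ^ 2 / (16 * ((1:ℂ) - (u:ℂ)) ^ 2)) :=
  stmt3_general b c ν ρ hρ hν z hz
end
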